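/- An arrangement (ι,κ) is globally adequate if and only if either (1) every doctor and every hospital has interview capacity exactly one, or (2) every doctor and every hospital has interview capacity at least min{|D|,|H|}. -/

import Mathlib

/- Formal model of the two-step interview-then-match process of
Echenique-et-al-style markets: Step 1 computes the interview matching by
hospital-proposing deferred acceptance (with responsive, capacity-constrained
choice functions); Step 2 computes the final one-to-one matching by
doctor-proposing deferred acceptance on preferences restricted to interview
partners. -/

open Finset

section Model

variable {D H : Type*} [Fintype D] [Fintype H] [DecidableEq D] [DecidableEq H]

/-- The (at most) `n` best elements of `s` according to `rank` (lower rank = better). -/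
def topN {α : Type*} [DecidableEq α] (rank : α → ℕ) (n : ℕ) (s : Finset α) : Finset α :=
  s.filter fun x => (s.filter fun y => rank y < rank x).card < n

/-- A market: strict preferences represented by rank functions
(lower rank = more preferred) together with acceptability predicates. -/
structure Market (D H : Type*) where
  rankDH : D → H → ℕ
  accD : D → H → Bool
  rankHD : H → D → ℕ
  accH : H → D → Bool

/-- Strict preferences: rank functions are injective. -/
def Market.Strict (M : Market D H) : Prop :=
  (∀ d, Function.Injective (M.rankDH d)) ∧ (∀ h, Function.Injective (M.rankHD h))

/-- Hospital `h` proposes to its `ι h` best acceptable doctors that have not rejected it. -/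
def hProps (M : Market D H) (ι : H → ℕ) (R : Finset (H × D)) (h : H) : Finset D :=
  topN (M.rankHD h) (ι h) (univ.filter fun d => M.accH h d ∧ (h, d) ∉ R)

/-- Doctor `d` keeps her `κ d` best acceptable proposals. -/
def dKeeps (M : Market D H) (ι : H → ℕ) (κ : D → ℕ) (R : Finset (H × D)) (d : D) :
    Finset H :=
  topN (fun h => M.rankDH d h) (κ d) (univ.filter fun h => M.accD d h ∧ d ∈ hProps M ι R h)

/-- One round of hospital-proposing deferred acceptance: the (cumulative) rejection set
grows by the proposals not kept. -/
def iStep (M : Market D H) (ι : H → ℕ) (κ : D → ℕ) (R : Finset (H × D)) :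
    Finset (H × D) :=
  R ∪ univ.filter fun p : H × D => p.2 ∈ hProps M ι R p.1 ∧ p.1 ∉ dKeeps M ι κ R p.2

/-- Rejection set at the end of hospital-proposing DA (interview step). -/
def iRej (M : Market D H) (ι : H → ℕ) (κ : D → ℕ) : Finset (H × D) :=
  (iStep M ι κ)^[Fintype.card D * Fintype.card H] ∅

/-- The interview matching (the hospital-optimal stable many-to-many matching) computed
by hospital-proposing deferred acceptance: pairs `(h, d)` such that `h` interviews `d`. -/
def interviews (M : Market D H) (ι : H → ℕ) (κ : D → ℕ) : Finset (H × D) :=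
  univ.filter fun p : H × D =>
    p.2 ∈ hProps M ι (iRej M ι κ) p.1 ∧ p.1 ∈ dKeeps M ι κ (iRej M ι κ) p.2

/-- Doctor `d` proposes to her best interview partner that has not rejected her. -/
def dProps (M : Market D H) (V : Finset (H × D)) (S : Finset (D × H)) (d : D) :
    Finset H :=
  topN (M.rankDH d) 1 (univ.filter fun h => (h, d) ∈ V ∧ (d, h) ∉ S)

/-- Hospital `h` keeps its best proposal. -/
def hKeeps (M : Market D H) (V : Finset (H × D)) (S : Finset (D × H)) (h : H) :
    Finset D :=
  topN (M.rankHD h) 1 (univ.filter fun d => h ∈ dProps M V S d)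

/-- One round of doctor-proposing DA on preferences restricted to the interview matching `V`. -/
def mStep (M : Market D H) (V : Finset (H × D)) (S : Finset (D × H)) : Finset (D × H) :=
  S ∪ univ.filter fun p : D × H => p.2 ∈ dProps M V S p.1 ∧ p.1 ∉ hKeeps M V S p.2

/-- Rejection set at the end of the doctor-proposing DA of the matching step. -/
def mRej (M : Market D H) (V : Finset (H × D)) : Finset (D × H) :=
  (mStep M V)^[Fintype.card D * Fintype.card H] ∅

/-- The final matching: doctor-proposing DA on preferences restricted to interviews `V`. -/
def finalMatch (M : Market D H) (V : Finset (H × D)) : Finset (D × H) :=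
  univ.filter fun p : D × H =>
    p.2 ∈ dProps M V (mRej M V) p.1 ∧ p.1 ∈ hKeeps M V (mRej M V) p.2

/-- The `(ι,κ)`-matching: the culmination of the two-step process. -/
def ikMatching (M : Market D H) (ι : H → ℕ) (κ : D → ℕ) : Finset (D × H) :=
  finalMatch M (interviews M ι κ)

/-- `(d, h)` is a blocking pair of `μ` (w.r.t. the true, unrestricted preferences). -/
def Blocks (M : Market D H) (μ : Finset (D × H)) (d : D) (h : H) : Prop :=
  M.accD d h ∧ M.accH h d ∧ (d, h) ∉ μ ∧
    (∀ h', (d, h') ∈ μ → M.rankDH d h < M.rankDH d h') ∧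
    (∀ d', (d', h) ∈ μ → M.rankHD h d < M.rankHD h d')

instance (M : Market D H) (μ : Finset (D × H)) (d : D) (h : H) :
    Decidable (Blocks M μ d h) := by
  unfold Blocks; infer_instance

/-- A matching is stable if it admits no blocking pair. -/
def Stable (M : Market D H) (μ : Finset (D × H)) : Prop := ∀ d h, ¬ Blocks M μ d h

/-- `(ι,κ)` is adequate at `M` if the `(ι,κ)`-matching is stable. -/
def Adequate (M : Market D H) (ι : H → ℕ) (κ : D → ℕ) : Prop :=
  Stable M (ikMatching M ι κ)

/-- One-to-one matching (as a set of pairs). -/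
def IsMatching (μ : Finset (D × H)) : Prop :=
  (∀ d h h', (d, h) ∈ μ → (d, h') ∈ μ → h = h') ∧
    (∀ d d' h, (d, h) ∈ μ → (d', h) ∈ μ → d = d')

/-- Common preferences: all doctors rank the hospitals identically, all hospitals rank
the doctors identically, everyone is mutually acceptable (and preferences are strict). -/
def CommonPrefs (M : Market D H) : Prop :=
  M.Strict ∧ (∀ d d', M.rankDH d = M.rankDH d') ∧ (∀ h h', M.rankHD h = M.rankHD h') ∧
    ∀ d h, M.accD d h ∧ M.accH h d

/-- Number of hospitals matched under `μ`. -/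
def matchedHospitals (μ : Finset (D × H)) : ℕ :=
  (univ.filter fun h : H => ∃ d, (d, h) ∈ μ).card

/-- Number of blocking pairs of `μ`. -/
def blockingCount (M : Market D H) (μ : Finset (D × H)) : ℕ :=
  (univ.filter fun p : D × H => Blocks M μ p.1 p.2).card

end Model

/-- `(ι,κ)` is globally adequate: adequate at every (strict) preference profile. -/
def GloballyAdequate (D H : Type*) [Fintype D] [Fintype H] [DecidableEq D] [DecidableEq H]
    (ι : H → ℕ) (κ : D → ℕ) : Prop :=
  ∀ M : Market D H, M.Strict → Adequate M ι κ

variable {D H : Type*} [Fintype D] [Fintype H] [DecidableEq D] [DecidableEq H]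

/-! Only two properties of the procedure matter. The interview matching is pairwise stable for
the capacities `(ι, κ)`, and the final matching is stable for the preferences restricted to
interview partners, because doctor-proposing deferred acceptance on restricted preferences is
hospital-proposing deferred acceptance, with unit capacities, in the market with the two sides
swapped.

With unit capacities the interview matching is one-to-one, hence equal to the final matching, and
it is stable. With capacities at least `min {|D|, |H|}`, a blocking pair `(d, h)` cannot have been
interviewed, so one side, say `d`, is full with interview partners it prefers to `h`. Each of them
is matched to another doctor in the final matching, so at least `min {|D|, |H|}` hospitals other
than `h` are matched to distinct doctors other than `d`, which is impossible.

Conversely, let a hospital `w` have capacity `k < min {|D|, |H|}` (the doctor case is the mirror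
image, through the swap). Take doctors `u₁, …, u_k` of capacity at least two, hospitals
`g₁, …, g_k` and one more doctor `z`. The acceptable pairs are `(uᵢ, gᵢ)`, `(uᵢ, w)` and `(z, w)`,
doctors rank `w` last and hospitals rank `z` last. Stability forces `w` to interview every `uᵢ`,
hence not `z`, and each `uᵢ` to interview `gᵢ`, whom she prefers to `w`. So no `uᵢ` ends up with
`w`, and `z` and `w` stay unmatched and block. Capacity zero is the case `k = 0`. Unless all
capacities are one or all are at least two, some capacity one faces a capacity at least two on the
other side, and `k = 1` works. -/

section TopN

variable {α : Type*} [DecidableEq α] {rank : α → ℕ} {n : ℕ} {s s' T : Finset α} {x y : α} {b : ℕ}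

theorem mem_topN : x ∈ topN rank n s ↔ x ∈ s ∧ #(s.filter fun y => rank y < rank x) < n := by
  simp [topN]

theorem topN_subset : topN rank n s ⊆ s := filter_subset _ _

theorem le_card_filter_of_notMem_topN (hx : x ∈ s) (hxn : x ∉ topN rank n s) :
    n ≤ #(s.filter fun y => rank y < rank x) :=
  not_lt.mp fun h => hxn (mem_topN.mpr ⟨hx, h⟩)

theorem mem_topN_of_subset (hs : s' ⊆ s) (hx : x ∈ topN rank n s) (hx' : x ∈ s') :
    x ∈ topN rank n s' :=
  mem_topN.mpr ⟨hx', (card_le_card (filter_subset_filter _ hs)).trans_lt (mem_topN.mp hx).2⟩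

theorem card_topN_le (hinj : Set.InjOn rank s) : #(topN rank n s) ≤ n := by
  obtain h | hne := (topN rank n s).eq_empty_or_nonempty
  · simp [h]
  obtain ⟨x, hx, hmax⟩ := exists_max_image _ rank hne
  have hsub : (topN rank n s).erase x ⊆ s.filter fun y => rank y < rank x := by
    intro y hy
    obtain ⟨hyx, hy⟩ := mem_erase.mp hy
    refine mem_filter.mpr ⟨topN_subset hy, (hmax y hy).lt_of_ne fun h => hyx ?_⟩
    exact hinj (topN_subset hy) (topN_subset hx) h
  have := card_le_card hsub
  rw [card_erase_of_mem hx] at this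
  have := (mem_topN.mp hx).2
  omega

theorem le_card_topN : min n #s ≤ #(topN rank n s) := by
  by_contra! hlt
  obtain ⟨x, hx, hmin⟩ := exists_min_image _ rank
    (sdiff_nonempty.mpr fun hs => (card_le_card hs).not_gt (hlt.trans_le (min_le_right _ _)))
  obtain ⟨hxs, hxn⟩ := mem_sdiff.mp hx
  have hbelow : (s.filter fun y => rank y < rank x) ⊆ topN rank n s := by
    intro y hy
    obtain ⟨hys, hyx⟩ := mem_filter.mp hy
    by_contra hyn
    exact (hmin y (mem_sdiff.mpr ⟨hys, hyn⟩)).not_gt hyx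
  exact hxn (mem_topN.mpr ⟨hxs, (card_le_card hbelow).trans_lt (hlt.trans_le (min_le_left _ _))⟩)

theorem le_card_topN_of_notMem (hx : x ∈ s) (hxn : x ∉ topN rank n s) :
    n ≤ #(topN rank n s) := by
  have hlt : #(s.filter fun y => rank y < rank x) < #s :=
    card_lt_card (filter_ssubset.mpr ⟨x, hx, lt_irrefl _⟩)
  have := le_card_filter_of_notMem_topN hx hxn
  exact (le_min le_rfl (by omega)).trans le_card_topN

theorem rank_lt_of_mem_topN (hT : T ⊆ s) (hn : n ≤ #T) (hTb : ∀ t ∈ T, rank t < b)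
    (hy : y ∈ topN rank n s) : rank y < b := by
  by_contra! hby
  have hsub : T ⊆ s.filter fun t => rank t < rank y :=
    fun t ht => mem_filter.mpr ⟨hT ht, (hTb t ht).trans_le hby⟩
  exact (hn.trans (card_le_card hsub)).not_gt (mem_topN.mp hy).2

theorem rank_lt_of_mem_topN_of_notMem (hx : x ∈ s) (hxn : x ∉ topN rank n s)
    (hy : y ∈ topN rank n s) : rank y < rank x :=
  rank_lt_of_mem_topN (filter_subset _ _) (le_card_filter_of_notMem_topN hx hxn)
    (fun _ ht => (mem_filter.mp ht).2) hy

end TopN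

theorem Function.isFixedPt_iterate_of_card_le {β : Type*} [Fintype β] [DecidableEq β]
    {f : Finset β → Finset β} (hf : ∀ s, s ⊆ f s) (s : Finset β) {n : ℕ}
    (hn : Fintype.card β ≤ n) : Function.IsFixedPt f (f^[n] s) := by
  have key : ∀ j, Function.IsFixedPt f (f^[j] s) ∨ j ≤ #(f^[j] s) := by
    intro j
    induction j with
    | zero => exact Or.inr (Nat.zero_le _)
    | succ j ih =>
      rw [Function.iterate_succ_apply']
      by_cases hfix : Function.IsFixedPt f (f^[j] s)
      · exact Or.inl (by rw [hfix.eq]; exact hfix)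
      · have := card_lt_card ((hf _).ssubset_of_ne (Ne.symm hfix))
        exact Or.inr (by have := ih.resolve_left hfix; omega)
  refine (key n).elim id fun h => ?_
  have huniv : f^[n] s = univ := eq_univ_of_card _ (le_antisymm (card_le_univ _) (hn.trans h))
  rw [Function.IsFixedPt, huniv]
  exact (subset_univ _).antisymm (hf _)

theorem exists_embedding_fin_of_le_card {α : Type*} (s : Finset α) {k : ℕ} (hk : k ≤ #s) :
    ∃ f : Fin k ↪ α, ∀ i, f i ∈ s := by
  obtain ⟨e⟩ := Function.Embedding.nonempty_of_card_le (α := Fin k) (β := s) (by simpa using hk)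
  exact ⟨e.trans (Function.Embedding.subtype _), fun i => (e i).2⟩

namespace Market

variable {D H : Type*}

def swap (M : Market D H) : Market H D := ⟨M.rankHD, M.accH, M.rankDH, M.accD⟩

open Classical in
noncomputable def restrict (M : Market D H) (I : D → H → Prop) : Market D H :=
  { M with accD := fun d h => decide (I d h), accH := fun h d => decide (I d h) }

variable {M : Market D H}

theorem Strict.swap (hM : M.Strict) : M.swap.Strict := ⟨hM.2, hM.1⟩

theorem Strict.restrict (hM : M.Strict) (I : D → H → Prop) : (M.restrict I).Strict := hM

end Market

section PairwiseStable

variable {D H : Type*}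

/-- `I d h` reads "`h` interviews `d`". Given the capacity bounds, `no_blocking_pair` is the
absence of a blocking pair: one side of any other acceptable pair is full with partners it
prefers. -/
structure IsPairwiseStable (M : Market D H) (ι : H → ℕ) (κ : D → ℕ) (I : D → H → Prop) :
    Prop where
  acceptable : ∀ d h, I d h → M.accD d h ∧ M.accH h d
  doctor_capacity : ∀ d, {h | I d h}.ncard ≤ κ d
  hospital_capacity : ∀ h, {d | I d h}.ncard ≤ ι h
  no_blocking_pair : ∀ d h, M.accD d h → M.accH h d → ¬ I d h →
    κ d ≤ {h' | I d h' ∧ M.rankDH d h' < M.rankDH d h}.ncard ∨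
      ι h ≤ {d' | I d' h ∧ M.rankHD h d' < M.rankHD h d}.ncard

def IsRestrictedStable (M : Market D H) (I m : D → H → Prop) : Prop :=
  IsPairwiseStable (M.restrict I) (fun _ => 1) (fun _ => 1) m

variable {M : Market D H} {ι : H → ℕ} {κ : D → ℕ} {I m : D → H → Prop} {d d₁ d₂ : D}
  {h h₁ h₂ : H}

namespace IsPairwiseStable

theorem swap (hI : IsPairwiseStable M ι κ I) : IsPairwiseStable M.swap κ ι (flip I) where
  acceptable h d hdh := (hI.acceptable d h hdh).symm
  doctor_capacity := hI.hospital_capacity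
  hospital_capacity := hI.doctor_capacity
  no_blocking_pair h d hacc hacc' hn := (hI.no_blocking_pair d h hacc' hacc hn).symm

theorem right_unique [Finite H] (hI : IsPairwiseStable M ι κ I) (hκ : κ d ≤ 1)
    (hdh₁ : I d h₁) (hdh₂ : I d h₂) : h₁ = h₂ :=
  (Set.ncard_le_one (Set.toFinite _)).mp ((hI.doctor_capacity d).trans hκ) _ hdh₁ _ hdh₂

theorem left_unique [Finite D] (hI : IsPairwiseStable M ι κ I) (hι : ι h ≤ 1)
    (hd₁h : I d₁ h) (hd₂h : I d₂ h) : d₁ = d₂ :=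
  hI.swap.right_unique hι hd₁h hd₂h

theorem exists_better (hI : IsPairwiseStable M ι κ I) (hκ : 1 ≤ κ d) (hι : 1 ≤ ι h)
    (hacc : M.accD d h) (hacc' : M.accH h d) (hn : ¬ I d h) :
    (∃ h', I d h' ∧ M.rankDH d h' < M.rankDH d h) ∨
      ∃ d', I d' h ∧ M.rankHD h d' < M.rankHD h d :=
  (hI.no_blocking_pair d h hacc hacc' hn).imp
    (fun hle => Set.nonempty_of_ncard_ne_zero (s := {h' | I d h' ∧ _}) (by omega))
    (fun hle => Set.nonempty_of_ncard_ne_zero (s := {d' | I d' h ∧ _}) (by omega))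

end IsPairwiseStable

namespace IsRestrictedStable

theorem swap (hm : IsRestrictedStable M I m) : IsRestrictedStable M.swap (flip I) (flip m) :=
  IsPairwiseStable.swap hm

theorem le (hm : IsRestrictedStable M I m) (hdh : m d h) : I d h := by
  simpa [Market.restrict] using (hm.acceptable d h hdh).1

theorem right_unique [Finite H] (hm : IsRestrictedStable M I m) : m d h₁ → m d h₂ → h₁ = h₂ :=
  IsPairwiseStable.right_unique hm le_rfl

theorem exists_better (hm : IsRestrictedStable M I m) (hdh : I d h) (hn : ¬ m d h) :
    (∃ h', m d h' ∧ M.rankDH d h' < M.rankDH d h) ∨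
      ∃ d', m d' h ∧ M.rankHD h d' < M.rankHD h d :=
  IsPairwiseStable.exists_better (M := M.restrict I) hm le_rfl le_rfl
    (by simpa [Market.restrict]) (by simpa [Market.restrict]) hn

end IsRestrictedStable

end PairwiseStable

section Interviews

variable {M : Market D H} {ι : H → ℕ} {κ : D → ℕ} {R R' : Finset (H × D)} {d : D} {h : H}

def offers (M : Market D H) (ι : H → ℕ) (R : Finset (H × D)) (d : D) : Finset H :=
  univ.filter fun h => M.accD d h ∧ d ∈ hProps M ι R h

theorem mem_offers : h ∈ offers M ι R d ↔ M.accD d h ∧ d ∈ hProps M ι R h := by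
  simp [offers]

omit [Fintype H] in
theorem accH_and_notMem_of_mem_hProps (hd : d ∈ hProps M ι R h) :
    M.accH h d ∧ (h, d) ∉ R := by
  simpa using topN_subset hd

omit [Fintype H] in
theorem mem_hProps_of_subset (hR : R ⊆ R') (hd : d ∈ hProps M ι R h) (hR' : (h, d) ∉ R') :
    d ∈ hProps M ι R' h := by
  refine mem_topN_of_subset (fun d' hd' => ?_) hd
    (by simp [(accH_and_notMem_of_mem_hProps hd).1, hR'])
  simp only [mem_filter, mem_univ, true_and] at hd' ⊢
  exact ⟨hd'.1, fun hm => hd'.2 (hR hm)⟩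

theorem subset_iStep : R ⊆ iStep M ι κ R := subset_union_left

theorem notMem_iStep_of_mem_dKeeps (hh : h ∈ dKeeps M ι κ R d) : (h, d) ∉ iStep M ι κ R := by
  have hd := (mem_offers.mp (topN_subset hh)).2
  simp only [iStep, mem_union, mem_filter, mem_univ, true_and, not_or, not_and, not_not]
  exact ⟨(accH_and_notMem_of_mem_hProps hd).2, fun _ => hh⟩

theorem dKeeps_subset_offers_iStep : dKeeps M ι κ R d ⊆ offers M ι (iStep M ι κ R) d := by
  intro h hh
  obtain ⟨hacc, hd⟩ := mem_offers.mp (topN_subset hh)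
  exact mem_offers.mpr
    ⟨hacc, mem_hProps_of_subset subset_iStep hd (notMem_iStep_of_mem_dKeeps hh)⟩

def RejectionsJustified (M : Market D H) (ι : H → ℕ) (κ : D → ℕ) (R : Finset (H × D)) :
    Prop :=
  ∀ h d, (h, d) ∈ R → M.accD d h →
    κ d ≤ #(dKeeps M ι κ R d) ∧ ∀ h' ∈ dKeeps M ι κ R d, M.rankDH d h' < M.rankDH d h

/-- The offers a doctor holds stay on offer in the next round, so they keep justifying her
earlier rejections. -/
theorem RejectionsJustified.iStep (hJ : RejectionsJustified M ι κ R) :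
    RejectionsJustified M ι κ (_root_.iStep M ι κ R) := by
  intro h d hR hacc
  obtain ⟨hcard, hbetter⟩ :
      κ d ≤ #(dKeeps M ι κ R d) ∧ ∀ h' ∈ dKeeps M ι κ R d, M.rankDH d h' < M.rankDH d h := by
    rcases mem_union.mp hR with hR | hR
    · exact hJ h d hR hacc
    · obtain ⟨hd, hnk⟩ : d ∈ hProps M ι R h ∧ h ∉ dKeeps M ι κ R d := by simpa using hR
      have hoff : h ∈ offers M ι R d := mem_offers.mpr ⟨hacc, hd⟩
      exact ⟨le_card_topN_of_notMem hoff hnk,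
        fun h' hh' => rank_lt_of_mem_topN_of_notMem hoff hnk hh'⟩
  have hoffers : κ d ≤ #(offers M ι (_root_.iStep M ι κ R) d) :=
    hcard.trans (card_le_card dKeeps_subset_offers_iStep)
  exact ⟨(le_min le_rfl hoffers).trans le_card_topN,
    fun h' hh' => rank_lt_of_mem_topN dKeeps_subset_offers_iStep hcard hbetter hh'⟩

theorem rejectionsJustified_iRej : RejectionsJustified M ι κ (iRej M ι κ) := by
  unfold iRej
  generalize Fintype.card D * Fintype.card H = n
  induction n with
  | zero => intro h d hR; simp at hR
  | succ n ih => rw [Function.iterate_succ_apply']; exact ih.iStep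

theorem isFixedPt_iRej : Function.IsFixedPt (iStep M ι κ) (iRej M ι κ) :=
  Function.isFixedPt_iterate_of_card_le (fun _ => subset_iStep) ∅
    (by rw [Fintype.card_prod, Nat.mul_comm])

theorem mem_interviews_iff : (h, d) ∈ interviews M ι κ ↔ d ∈ hProps M ι (iRej M ι κ) h := by
  simp only [interviews, mem_filter, mem_univ, true_and, and_iff_left_iff_imp]
  intro hd
  by_contra hnk
  have hrej : (h, d) ∈ iStep M ι κ (iRej M ι κ) := mem_union_right _ (by simpa using ⟨hd, hnk⟩)
  rw [isFixedPt_iRej.eq] at hrej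
  exact (accH_and_notMem_of_mem_hProps hd).2 hrej

theorem mem_dKeeps_of_mem_interviews (hm : (h, d) ∈ interviews M ι κ) :
    h ∈ dKeeps M ι κ (iRej M ι κ) d :=
  (mem_filter.mp hm).2.2

/-- A pair is rejected only by a doctor holding `κ d` better offers, and a hospital stops short
of an acceptable doctor only after proposing to `ι h` better ones. -/
theorem isPairwiseStable_interviews (hM : M.Strict) :
    IsPairwiseStable M ι κ fun d h => (h, d) ∈ interviews M ι κ where
  acceptable d h hm :=
    ⟨(mem_offers.mp (topN_subset (mem_dKeeps_of_mem_interviews hm))).1,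
      (accH_and_notMem_of_mem_hProps (mem_interviews_iff.mp hm)).1⟩
  doctor_capacity d := by
    calc {h | (h, d) ∈ interviews M ι κ}.ncard
        ≤ (dKeeps M ι κ (iRej M ι κ) d : Set H).ncard :=
          Set.ncard_le_ncard fun h hm => mem_dKeeps_of_mem_interviews hm
      _ ≤ κ d := by rw [Set.ncard_coe_finset]; exact card_topN_le (hM.1 d).injOn
  hospital_capacity h := by
    have hset : {d | (h, d) ∈ interviews M ι κ} = hProps M ι (iRej M ι κ) h := by
      ext d; simp [mem_interviews_iff]
    rw [hset, Set.ncard_coe_finset]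
    exact card_topN_le (hM.2 h).injOn
  no_blocking_pair d h hacc hacc' hn := by
    by_cases hR : (h, d) ∈ iRej M ι κ
    · obtain ⟨hcard, hbetter⟩ := rejectionsJustified_iRej h d hR hacc
      refine Or.inl (hcard.trans ?_)
      rw [← Set.ncard_coe_finset]
      exact Set.ncard_le_ncard fun h' hh' =>
        ⟨mem_interviews_iff.mpr (mem_offers.mp (topN_subset hh')).2, hbetter h' hh'⟩
    · have hcand : d ∈ univ.filter fun d' => M.accH h d' ∧ (h, d') ∉ iRej M ι κ := by
        simp [hacc', hR]
      have hnp : d ∉ hProps M ι (iRej M ι κ) h := fun hp => hn (mem_interviews_iff.mpr hp)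
      refine Or.inr ((le_card_topN_of_notMem hcand hnp).trans ?_)
      rw [← Set.ncard_coe_finset]
      exact Set.ncard_le_ncard fun d' hd' =>
        ⟨mem_interviews_iff.mpr hd', rank_lt_of_mem_topN_of_notMem hcand hnp hd'⟩

end Interviews

section FinalMatching

variable {M : Market D H}

theorem finalMatch_eq_interviews (V : Finset (H × D)) :
    finalMatch M V =
      interviews (M.restrict fun d h => (h, d) ∈ V).swap (fun _ => 1) (fun _ => 1) := by
  set M' := (M.restrict fun d h => (h, d) ∈ V).swap
  have hProps_eq : ∀ S d, hProps M' (fun _ => 1) S d = dProps M V S d := by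
    intro S d
    unfold hProps dProps
    congr 1
    exact filter_congr fun h _ => by simp [M', Market.swap, Market.restrict]
  have dKeeps_eq : ∀ S h, dKeeps M' (fun _ => 1) (fun _ => 1) S h = hKeeps M V S h := by
    intro S h
    unfold dKeeps hKeeps
    congr 1
    refine filter_congr fun d _ => ?_
    rw [hProps_eq]
    simpa [M', Market.swap, Market.restrict] using
      fun hd => (mem_filter.mp (topN_subset hd)).2.1
  have iRej_eq : iRej M' (fun _ => 1) (fun _ => 1) = mRej M V := by
    have : iStep M' (fun _ => 1) (fun _ => 1) = mStep M V := by
      funext S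
      simp only [iStep, mStep, hProps_eq, dKeeps_eq]
    rw [iRej, mRej, this, Nat.mul_comm]
  simp only [interviews, finalMatch, hProps_eq, dKeeps_eq, iRej_eq]

theorem isRestrictedStable_finalMatch (hM : M.Strict) (V : Finset (H × D)) :
    IsRestrictedStable M (fun d h => (h, d) ∈ V) fun d h => (d, h) ∈ finalMatch M V := by
  have hI := (isPairwiseStable_interviews (ι := fun _ => 1) (κ := fun _ => 1)
    ((hM.restrict fun d h => (h, d) ∈ V).swap)).swap
  rw [← finalMatch_eq_interviews] at hI
  exact hI

end FinalMatching

section Sufficiency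

variable {D H : Type*} {M : Market D H} {ι : H → ℕ} {κ : D → ℕ} {I : D → H → Prop}
  {μ : Finset (D × H)}

theorem stable_of_capacities_eq_one [Finite D] [Finite H] (hI : IsPairwiseStable M ι κ I)
    (hμ : IsRestrictedStable M I fun d h => (d, h) ∈ μ) (hκ : ∀ d, κ d = 1)
    (hι : ∀ h, ι h = 1) : Stable M μ := by
  have hmem : ∀ d h, I d h → (d, h) ∈ μ := by
    intro d h hdh
    by_contra hn
    rcases hμ.exists_better hdh hn with ⟨h', hh', hlt⟩ | ⟨d', hd', hlt⟩
    · rw [hI.right_unique (hκ d).le (hμ.le hh') hdh] at hlt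
      exact lt_irrefl _ hlt
    · rw [hI.left_unique (hι h).le (hμ.le hd') hdh] at hlt
      exact lt_irrefl _ hlt
  rintro d h ⟨hacc, hacc', hn, hd, hh⟩
  rcases hI.exists_better (hκ d).ge (hι h).ge hacc hacc' fun hdh => hn (hmem d h hdh) with
    ⟨h', hh', hlt⟩ | ⟨d', hd', hlt⟩
  · exact lt_asymm hlt (hd h' (hmem _ _ hh'))
  · exact lt_asymm hlt (hh d' (hmem _ _ hd'))

/-- Each interview partner that `d` prefers to `h` is matched to another doctor, and these
doctors are distinct. -/
theorem ncard_better_lt_min [Fintype D] [Fintype H] {m : D → H → Prop}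
    (hm : IsRestrictedStable M I m) {d : D} {h : H}
    (hd : ∀ h', m d h' → M.rankDH d h < M.rankDH d h') :
    {h' | I d h' ∧ M.rankDH d h' < M.rankDH d h}.ncard <
      min (Fintype.card D) (Fintype.card H) := by
  set B := {h' | I d h' ∧ M.rankDH d h' < M.rankDH d h}
  have hpartner : ∀ h' ∈ B, ∃ d', d' ≠ d ∧ m d' h' := by
    rintro h' ⟨hdh', hlt⟩
    have hn : ¬ m d h' := fun hm' => lt_asymm hlt (hd h' hm')
    rcases hm.exists_better hdh' hn with ⟨h'', hm'', hlt'⟩ | ⟨d', hm', -⟩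
    · exact absurd (hd h'' hm'') (lt_asymm (hlt'.trans hlt))
    · exact ⟨d', fun he => hn (he ▸ hm'), hm'⟩
  have : Nonempty D := ⟨d⟩
  choose! f hfne hfm using hpartner
  have hinj : Set.InjOn f B := fun a ha b hb hab => hm.right_unique (hfm a ha) (hab ▸ hfm b hb)
  have hD : B.ncard < Fintype.card D := by
    rw [← hinj.ncard_image, ← Nat.card_eq_fintype_card]
    refine Set.ncard_lt_card fun huniv => ?_
    obtain ⟨h', hh', he⟩ := huniv.symm ▸ Set.mem_univ d
    exact hfne h' hh' he
  have hH : B.ncard < Fintype.card H := by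
    rw [← Nat.card_eq_fintype_card]
    exact Set.ncard_lt_card fun huniv => (lt_irrefl _ (huniv.symm ▸ Set.mem_univ h).2)
  exact lt_min hD hH

theorem stable_of_min_card_le_capacities [Fintype D] [Fintype H] (hI : IsPairwiseStable M ι κ I)
    (hμ : IsRestrictedStable M I fun d h => (d, h) ∈ μ)
    (hκ : ∀ d, min (Fintype.card D) (Fintype.card H) ≤ κ d)
    (hι : ∀ h, min (Fintype.card D) (Fintype.card H) ≤ ι h) : Stable M μ := by
  rintro d h ⟨hacc, hacc', hn, hd, hh⟩
  by_cases hdh : I d h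
  · rcases hμ.exists_better hdh hn with ⟨h', hh', hlt⟩ | ⟨d', hd', hlt⟩
    exacts [lt_asymm hlt (hd h' hh'), lt_asymm hlt (hh d' hd')]
  · rcases hI.no_blocking_pair d h hacc hacc' hdh with hle | hle
    · have := ncard_better_lt_min hμ hd
      have := hκ d
      omega
    · have : {d' | I d' h ∧ M.rankHD h d' < M.rankHD h d}.ncard <
          min (Fintype.card H) (Fintype.card D) := ncard_better_lt_min hμ.swap hh
      rw [min_comm] at this
      have := hι h
      omega

end Sufficiency

section LastRank

variable {α : Type*} [Fintype α] [DecidableEq α] {a x : α}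

noncomputable def lastRank (a x : α) : ℕ :=
  if x = a then Fintype.card α else Fintype.equivFin α x

theorem lastRank_injective (a : α) : Function.Injective (lastRank a) := by
  intro x y hxy
  unfold lastRank at hxy
  split_ifs at hxy with hx hy hy
  · rw [hx, hy]
  · exact absurd hxy (Fintype.equivFin α y).isLt.ne'
  · exact absurd hxy (Fintype.equivFin α x).isLt.ne
  · exact (Fintype.equivFin α).injective (Fin.ext hxy)

theorem lastRank_lt (hx : x ≠ a) : lastRank a x < lastRank a a := by
  simp [lastRank, hx]

end LastRank

section CrowdedAcceptable

variable {D H : Type*} {k : ℕ} {u : Fin k ↪ D} {z : D} {g : Fin k ↪ H} {w : H} {d : D} {h : H}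
  {i : Fin k}

def CrowdedAcceptable (u : Fin k ↪ D) (z : D) (g : Fin k ↪ H) (w : H) (d : D) (h : H) : Prop :=
  (∃ i, d = u i ∧ (h = g i ∨ h = w)) ∨ (d = z ∧ h = w)

theorem CrowdedAcceptable.eq_of_u (hz : z ∉ Set.range u)
    (ha : CrowdedAcceptable u z g w (u i) h) : h = g i ∨ h = w := by
  rcases ha with ⟨j, hij, hj⟩ | ⟨hiz, hhw⟩
  · rwa [u.injective hij]
  · exact absurd ⟨i, hiz⟩ hz

theorem CrowdedAcceptable.eq_of_g (hw : w ∉ Set.range g)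
    (ha : CrowdedAcceptable u z g w d (g i)) : d = u i := by
  rcases ha with ⟨j, rfl, hj | hj⟩ | ⟨-, hgw⟩
  · rw [g.injective hj]
  · exact absurd ⟨i, hj⟩ hw
  · exact absurd ⟨i, hgw⟩ hw

theorem CrowdedAcceptable.eq_of_z (hz : z ∉ Set.range u)
    (ha : CrowdedAcceptable u z g w z h) : h = w := by
  rcases ha with ⟨j, hj, -⟩ | ⟨-, hhw⟩
  · exact absurd ⟨j, hj.symm⟩ hz
  · exact hhw

end CrowdedAcceptable

section CrowdedMarket

variable {k : ℕ} {u : Fin k ↪ D} {z : D} {g : Fin k ↪ H} {w : H} {ι : H → ℕ} {κ : D → ℕ}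
  {I m : D → H → Prop} {d : D} {h : H} {i : Fin k}

open Classical in
noncomputable def crowdedMarket (u : Fin k ↪ D) (z : D) (g : Fin k ↪ H) (w : H) :
    Market D H where
  rankDH _ := lastRank w
  accD d h := decide (CrowdedAcceptable u z g w d h)
  rankHD _ := lastRank z
  accH h d := decide (CrowdedAcceptable u z g w d h)

theorem crowdedMarket_strict (u : Fin k ↪ D) (z : D) (g : Fin k ↪ H) (w : H) :
    (crowdedMarket u z g w).Strict :=
  ⟨fun _ => lastRank_injective w, fun _ => lastRank_injective z⟩

theorem crowdedMarket_acc :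
    (crowdedMarket u z g w).accD d h ∧ (crowdedMarket u z g w).accH h d ↔
      CrowdedAcceptable u z g w d h := by
  simp [crowdedMarket]

theorem IsPairwiseStable.crowdedAcceptable
    (hI : IsPairwiseStable (crowdedMarket u z g w) ι κ I) (hdh : I d h) :
    CrowdedAcceptable u z g w d h :=
  crowdedMarket_acc.mp (hI.acceptable d h hdh)

theorem IsPairwiseStable.crowdedMarket_interviews_g
    (hI : IsPairwiseStable (crowdedMarket u z g w) ι κ I) (hz : z ∉ Set.range u)
    (hw : w ∉ Set.range g) (hκ : ∀ i, 2 ≤ κ (u i)) (hι : ∀ i, 1 ≤ ι (g i)) (i : Fin k) :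
    I (u i) (g i) := by
  by_contra hn
  have hgw : g i ≠ w := fun he => hw ⟨i, he⟩
  obtain ⟨hacc, hacc'⟩ : (crowdedMarket u z g w).accD (u i) (g i) ∧ _ :=
    crowdedMarket_acc.mpr (Or.inl ⟨i, rfl, Or.inl rfl⟩)
  rcases hI.exists_better (by linarith [hκ i]) (hι i) hacc hacc' hn with
    ⟨h', hh', hlt⟩ | ⟨d', hd', hlt⟩
  · rcases (hI.crowdedAcceptable hh').eq_of_u hz with rfl | rfl
    · exact hn hh'
    · exact lt_asymm hlt (lastRank_lt hgw)
  · rw [(hI.crowdedAcceptable hd').eq_of_g hw] at hd'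
    exact hn hd'

/-- If `w` interviewed `z`, whom it ranks last, some `u i` would be left out although `w`
prefers her to `z` and she has a free interview slot. -/
theorem IsPairwiseStable.crowdedMarket_not_interviews_z
    (hI : IsPairwiseStable (crowdedMarket u z g w) ι κ I) (hz : z ∉ Set.range u)
    (hιw : ι w ≤ k) (hκ : ∀ i, 2 ≤ κ (u i)) : ¬ I z w := by
  intro hzw
  set S := {d | I d w}
  have hzS : z ∈ S := hzw
  have hS : S.ncard ≤ ι w := hI.hospital_capacity w
  have huS : ∀ i, u i ∈ S := by
    intro i
    by_contra hn
    have hne : u i ≠ z := fun he => hz ⟨i, he⟩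
    obtain ⟨hacc, hacc'⟩ : (crowdedMarket u z g w).accD (u i) w ∧ _ :=
      crowdedMarket_acc.mpr (Or.inl ⟨i, rfl, Or.inr rfl⟩)
    rcases hI.no_blocking_pair (u i) w hacc hacc' hn with hle | hle
    · have hsub : {h' | I (u i) h' ∧ lastRank w h' < lastRank w w} ⊆ {g i} := by
        rintro h' ⟨hh', hlt⟩
        rcases (hI.crowdedAcceptable hh').eq_of_u hz with rfl | rfl
        · rfl
        · exact absurd hlt (lt_irrefl _)
      have := (Set.ncard_le_ncard hsub).trans (Set.ncard_singleton (g i)).le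
      have := hκ i
      change κ (u i) ≤ {h' | I (u i) h' ∧ lastRank w h' < lastRank w w}.ncard at hle
      omega
    · have hsub : {d' | I d' w ∧ lastRank z d' < lastRank z (u i)} ⊆ S \ {z} := by
        rintro d' ⟨hd', hlt⟩
        refine ⟨hd', ?_⟩
        rintro rfl
        exact lt_asymm hlt (lastRank_lt hne)
      have := Set.ncard_le_ncard hsub
      rw [Set.ncard_sdiff_singleton_of_mem hzS] at this
      have : 0 < S.ncard := (Set.ncard_pos (Set.toFinite _)).mpr ⟨z, hzS⟩
      change ι w ≤ {d' | I d' w ∧ lastRank z d' < lastRank z (u i)}.ncard at hle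
      omega
  have := Set.ncard_le_ncard (Set.insert_subset hzS (Set.range_subset_iff.mpr huS))
  rw [Set.ncard_insert_of_notMem hz, Set.ncard_range_of_injective u.injective,
    Nat.card_eq_fintype_card, Fintype.card_fin] at this
  omega

/-- The `u i` interview `g i` and `w`, and prefer `g i`, whose only possible interviewee they
are; so none of them ends up with `w`, and `z` has no interview at all. -/
theorem IsPairwiseStable.crowdedMarket_unmatched
    (hI : IsPairwiseStable (crowdedMarket u z g w) ι κ I)
    (hm : IsRestrictedStable (crowdedMarket u z g w) I m) (hz : z ∉ Set.range u)
    (hw : w ∉ Set.range g) (hιw : ι w ≤ k) (hκ : ∀ i, 2 ≤ κ (u i)) (hι : ∀ i, 1 ≤ ι (g i)) :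
    (∀ h, ¬ m z h) ∧ ∀ d, ¬ m d w := by
  have hzw := hI.crowdedMarket_not_interviews_z hz hιw hκ
  refine ⟨fun h hzh => hzw ?_, fun d hdw => ?_⟩
  · rw [← (hI.crowdedAcceptable (hm.le hzh)).eq_of_z hz]
    exact hm.le hzh
  rcases hI.crowdedAcceptable (hm.le hdw) with ⟨i, rfl, -⟩ | ⟨rfl, -⟩
  · have hgw : g i ≠ w := fun he => hw ⟨i, he⟩
    have hn : ¬ m (u i) (g i) := fun hug => hgw (hm.right_unique hug hdw)
    rcases hm.exists_better (hI.crowdedMarket_interviews_g hz hw hκ hι i) hn with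
      ⟨h', hh', hlt⟩ | ⟨d', hd', hlt⟩
    · rw [hm.right_unique hh' hdw] at hlt
      exact lt_asymm hlt (lastRank_lt hgw)
    · rw [(hI.crowdedAcceptable (hm.le hd')).eq_of_g hw] at hlt
      exact lt_irrefl _ hlt
  · exact hzw (hm.le hdw)

end CrowdedMarket

section Necessity

variable {ι : H → ℕ} {κ : D → ℕ}

theorem not_adequate_of_unmatched {M : Market D H} {d : D} {h : H} (hacc : M.accD d h)
    (hacc' : M.accH h d) (hd : ∀ h', (d, h') ∉ ikMatching M ι κ)
    (hh : ∀ d', (d', h) ∉ ikMatching M ι κ) : ¬ Adequate M ι κ :=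
  fun hst => hst d h
    ⟨hacc, hacc', hd h, fun h' hm => absurd hm (hd h'), fun d' hm => absurd hm (hh d')⟩

theorem not_adequate_crowdedMarket {k : ℕ} {u : Fin k ↪ D} {z : D} {g : Fin k ↪ H} {w : H}
    (hz : z ∉ Set.range u) (hw : w ∉ Set.range g) (hιw : ι w ≤ k) (hκ : ∀ i, 2 ≤ κ (u i))
    (hι : ∀ i, 1 ≤ ι (g i)) : ¬ Adequate (crowdedMarket u z g w) ι κ := by
  have hM := crowdedMarket_strict u z g w
  obtain ⟨hzm, hwm⟩ := (isPairwiseStable_interviews hM).crowdedMarket_unmatched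
    (isRestrictedStable_finalMatch hM _) hz hw hιw hκ hι
  obtain ⟨hacc, hacc'⟩ : (crowdedMarket u z g w).accD z w ∧ _ :=
    crowdedMarket_acc.mpr (Or.inr ⟨rfl, rfl⟩)
  exact not_adequate_of_unmatched hacc hacc' hzm hwm

theorem not_adequate_swap_crowdedMarket {k : ℕ} {u : Fin k ↪ H} {z : H} {g : Fin k ↪ D}
    {w : D} (hz : z ∉ Set.range u) (hw : w ∉ Set.range g) (hκw : κ w ≤ k)
    (hι : ∀ i, 2 ≤ ι (u i)) (hκ : ∀ i, 1 ≤ κ (g i)) :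
    ¬ Adequate (crowdedMarket u z g w).swap ι κ := by
  have hM := (crowdedMarket_strict u z g w).swap
  have hI : IsPairwiseStable (crowdedMarket u z g w) κ ι _ := (isPairwiseStable_interviews hM).swap
  obtain ⟨hzm, hwm⟩ :=
    hI.crowdedMarket_unmatched (isRestrictedStable_finalMatch hM _).swap hz hw hκw hι hκ
  obtain ⟨hacc, hacc'⟩ : (crowdedMarket u z g w).accD z w ∧ _ :=
    crowdedMarket_acc.mpr (Or.inr ⟨rfl, rfl⟩)
  exact not_adequate_of_unmatched (M := (crowdedMarket u z g w).swap) hacc' hacc hwm hzm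

theorem not_globallyAdequate_of_hospital (w : H) (z : D) {U : Finset D} {G : Finset H}
    (hzU : z ∉ U) (hwG : w ∉ G) (hU : ι w ≤ #U) (hG : ι w ≤ #G) (hκ : ∀ d ∈ U, 2 ≤ κ d)
    (hι : ∀ h ∈ G, 1 ≤ ι h) : ¬ GloballyAdequate D H ι κ := by
  obtain ⟨u, hu⟩ := exists_embedding_fin_of_le_card U hU
  obtain ⟨g, hg⟩ := exists_embedding_fin_of_le_card G hG
  refine fun hGA => not_adequate_crowdedMarket (z := z) (w := w) ?_ ?_ le_rfl
    (fun i => hκ _ (hu i)) (fun i => hι _ (hg i)) (hGA _ (crowdedMarket_strict u z g w))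
  · rintro ⟨i, hi⟩
    exact hzU (hi ▸ hu i)
  · rintro ⟨i, hi⟩
    exact hwG (hi ▸ hg i)

theorem not_globallyAdequate_of_doctor (y : D) (x : H) {U : Finset H} {G : Finset D}
    (hxU : x ∉ U) (hyG : y ∉ G) (hU : κ y ≤ #U) (hG : κ y ≤ #G) (hι : ∀ h ∈ U, 2 ≤ ι h)
    (hκ : ∀ d ∈ G, 1 ≤ κ d) : ¬ GloballyAdequate D H ι κ := by
  obtain ⟨u, hu⟩ := exists_embedding_fin_of_le_card U hU
  obtain ⟨g, hg⟩ := exists_embedding_fin_of_le_card G hG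
  refine fun hGA => not_adequate_swap_crowdedMarket (z := x) (w := y) ?_ ?_ le_rfl
    (fun i => hι _ (hu i)) (fun i => hκ _ (hg i)) (hGA _ (crowdedMarket_strict u x g y).swap)
  · rintro ⟨i, hi⟩
    exact hxU (hi ▸ hu i)
  · rintro ⟨i, hi⟩
    exact hyG (hi ▸ hg i)

theorem not_globallyAdequate_of_capacity_eq_zero [Nonempty D] [Nonempty H]
    (h0 : (∃ y, κ y = 0) ∨ ∃ w, ι w = 0) : ¬ GloballyAdequate D H ι κ := by
  rcases h0 with ⟨y, hy⟩ | ⟨w, hw⟩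
  · exact not_globallyAdequate_of_doctor y (Classical.arbitrary H) (U := ∅) (G := ∅)
      (by simp) (by simp) (by simp [hy]) (by simp [hy]) (by simp) (by simp)
  · exact not_globallyAdequate_of_hospital w (Classical.arbitrary D) (U := ∅) (G := ∅)
      (by simp) (by simp) (by simp [hw]) (by simp [hw]) (by simp) (by simp)

theorem not_globallyAdequate_of_mixed (hD : 2 ≤ Fintype.card D) (hH : 2 ≤ Fintype.card H)
    (hκ : ∀ d, 1 ≤ κ d) (hι : ∀ h, 1 ≤ ι h)
    (hmixed : (∃ y x, κ y = 1 ∧ 2 ≤ ι x) ∨ ∃ w u, ι w = 1 ∧ 2 ≤ κ u) :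
    ¬ GloballyAdequate D H ι κ := by
  have : Nontrivial D := Fintype.one_lt_card_iff_nontrivial.mp hD
  have : Nontrivial H := Fintype.one_lt_card_iff_nontrivial.mp hH
  rcases hmixed with ⟨y, x, hy, hx⟩ | ⟨w, u, hw, hu⟩
  · obtain ⟨x', hx'⟩ := exists_ne x
    exact not_globallyAdequate_of_doctor y x' (U := {x}) (G := univ.erase y)
      (by simpa using hx') (by simp) (by simp [hy]) (by simp [hy]; omega) (by simpa using hx)
      (fun d _ => hκ d)
  · obtain ⟨u', hu'⟩ := exists_ne u
    exact not_globallyAdequate_of_hospital w u' (U := {u}) (G := univ.erase w)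
      (by simpa using hu') (by simp) (by simp [hw]) (by simp [hw]; omega) (by simpa using hu)
      (fun h _ => hι h)

theorem not_globallyAdequate_of_two_le [Nonempty D] [Nonempty H] (hκ : ∀ d, 2 ≤ κ d)
    (hι : ∀ h, 2 ≤ ι h)
    (hmin : (∃ y, κ y < min (Fintype.card D) (Fintype.card H)) ∨
      ∃ w, ι w < min (Fintype.card D) (Fintype.card H)) :
    ¬ GloballyAdequate D H ι κ := by
  rcases hmin with ⟨y, hy⟩ | ⟨w, hw⟩
  · let x := Classical.arbitrary H
    exact not_globallyAdequate_of_doctor y x (U := univ.erase x) (G := univ.erase y)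
      (by simp) (by simp) (by simp; omega) (by simp; omega) (fun h _ => hι h)
      (fun d _ => (hκ d).trans' one_le_two)
  · let z := Classical.arbitrary D
    exact not_globallyAdequate_of_hospital w z (U := univ.erase z) (G := univ.erase w)
      (by simp) (by simp) (by simp; omega) (by simp; omega) (fun d _ => hκ d)
      (fun h _ => (hι h).trans' one_le_two)

omit [Fintype D] [Fintype H] [DecidableEq D] [DecidableEq H] in
theorem two_le_capacities [Nonempty D] [Nonempty H] (hκ : ∀ d, 1 ≤ κ d) (hι : ∀ h, 1 ≤ ι h)
    (hone : ¬ ((∀ d, κ d = 1) ∧ ∀ h, ι h = 1))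
    (hmixed : ¬ ((∃ y x, κ y = 1 ∧ 2 ≤ ι x) ∨ ∃ w u, ι w = 1 ∧ 2 ≤ κ u)) :
    (∀ d, 2 ≤ κ d) ∧ ∀ h, 2 ≤ ι h := by
  have hdoc : ∀ y, κ y = 1 → ∀ x, ι x = 1 := fun y hy x => by
    by_contra hx
    exact hmixed (Or.inl ⟨y, x, hy, by have := hι x; omega⟩)
  have hhos : ∀ w, ι w = 1 → ∀ u, κ u = 1 := fun w hw u => by
    by_contra hu
    exact hmixed (Or.inr ⟨w, u, hw, by have := hκ u; omega⟩)
  by_contra hlt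
  simp only [not_and_or, not_forall, not_le] at hlt
  refine hone ?_
  rcases hlt with ⟨y, hy⟩ | ⟨w, hw⟩
  · have hι1 := hdoc y (by have := hκ y; omega)
    exact ⟨hhos (Classical.arbitrary H) (hι1 _), hι1⟩
  · have hκ1 := hhos w (by have := hι w; omega)
    exact ⟨hκ1, hdoc (Classical.arbitrary D) (hκ1 _)⟩

theorem not_globallyAdequate (hD : 2 ≤ Fintype.card D) (hH : 2 ≤ Fintype.card H)
    (hone : ¬ ((∀ d, κ d = 1) ∧ ∀ h, ι h = 1))
    (hmin : ¬ ((∀ d, min (Fintype.card D) (Fintype.card H) ≤ κ d) ∧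
      ∀ h, min (Fintype.card D) (Fintype.card H) ≤ ι h)) :
    ¬ GloballyAdequate D H ι κ := by
  have : Nonempty D := Fintype.card_pos_iff.mp (by omega)
  have : Nonempty H := Fintype.card_pos_iff.mp (by omega)
  by_cases h0 : (∃ y, κ y = 0) ∨ ∃ w, ι w = 0
  · exact not_globallyAdequate_of_capacity_eq_zero h0
  simp only [not_or, not_exists, ← Nat.one_le_iff_ne_zero] at h0
  by_cases hmixed : (∃ y x, κ y = 1 ∧ 2 ≤ ι x) ∨ ∃ w u, ι w = 1 ∧ 2 ≤ κ u
  · exact not_globallyAdequate_of_mixed hD hH h0.1 h0.2 hmixed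
  obtain ⟨hκ, hι⟩ := two_le_capacities h0.1 h0.2 hone hmixed
  simp only [not_and_or, not_forall, not_le] at hmin
  exact not_globallyAdequate_of_two_le hκ hι hmin

end Necessity

/-- `(ι,κ)` is globally adequate if and only if either every agent has
interview capacity exactly one, or every agent has interview capacity at least
`min {|D|, |H|}`. -/
theorem globally_adequate_characterization
    (hD : 2 ≤ Fintype.card D) (hH : 2 ≤ Fintype.card H)
    (ι : H → ℕ) (κ : D → ℕ) :
    GloballyAdequate D H ι κ ↔
      ((∀ d : D, κ d = 1) ∧ (∀ h : H, ι h = 1)) ∨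
      ((∀ d : D, min (Fintype.card D) (Fintype.card H) ≤ κ d) ∧
        (∀ h : H, min (Fintype.card D) (Fintype.card H) ≤ ι h)) := by
  refine ⟨fun hGA => ?_, ?_⟩
  · by_contra hne
    exact not_globallyAdequate hD hH (not_or.mp hne).1 (not_or.mp hne).2 hGA
  · rintro (⟨hκ, hι⟩ | ⟨hκ, hι⟩) M hM
    · exact stable_of_capacities_eq_one (isPairwiseStable_interviews hM)
        (isRestrictedStable_finalMatch hM _) hκ hι
    · exact stable_of_min_card_le_capacities (isPairwiseStable_interviews hM)
        (isRestrictedStable_finalMatch hM _) hκ hι
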